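/- arXiv:2303.15222 — 2 statements merged into one kernel-verified Lean document; each statement's English description precedes it below -/
import Mathlib

section
/- Let c ∈ ℂ, r > 0, and let f : ℂ → ℂ be complex-differentiable on an open set containing the closed disk {z : |z - c| ≤ r}. Let x_0, …, x_n be distinct points in the open disk {z : |z - c| < r}, and define the discrete logarithmic potential U(z) = (1/(n+1)) ∑_{i=0}^n log(1/|z - x_i|) for z ∉ {x_0, …, x_n}. Then for every x in the open disk {z : |z - c| < r} with x ∉ {x_0, …, x_n}, |f(x) - P_n(x)| ≤ (r/(2π))·(∫_0^{2π} |f(c + re^{iθ})|/|c + re^{iθ} - x| dθ)·(exp(sup_{θ∈[0,2π]} U(c + re^{iθ}) - U(x)))^{n+1}, where P_n(x) = ∑_{i=0}^n f(x_i) ∏_{j≠i} (x - x_j)/(x_i - x_j) is the Lagrange interpolating polynomial of f at the nodes. -/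
/-!
Hermite's formula: since `1/(z - X)` minus its Lagrange interpolant at the nodes equals
`ω(X) / (ω(z) (z - X))` with `ω(y) = ∏ (y - xᵢ)`, Cauchy's integral formula at `X` and at the
nodes gives `f(X) - P(X) = (2πi)⁻¹ ∮ ω(X) / (ω(z) (z - X)) f(z) dz`. On the circle,
`|ω(X) / ω(z)| = exp(U(z) - U(X))^(n+1) ≤ exp(sup U - U(X))^(n+1)`, and the standard estimate of a
contour integral by the integral of the norm concludes.
-/

open Finset Metric Complex Real

namespace Lagrange

open Polynomial

variable {F ι : Type*} [Field F] [DecidableEq ι] {s : Finset ι} {v : ι → F}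

theorem eval_basis (X : F) (i : ι) :
    eval X (Lagrange.basis s v i) = ∏ j ∈ s.erase i, (X - v j) / (v i - v j) := by
  simp only [Lagrange.basis, basisDivisor, eval_prod, eval_mul, eval_C, eval_sub, eval_X,
    div_eq_inv_mul]

theorem sum_nodalWeight_mul_inv_sub (hvs : Set.InjOn v s) (hs : s.Nonempty) {x : F}
    (hx : ∀ i ∈ s, x ≠ v i) :
    ∑ i ∈ s, nodalWeight s v i * (x - v i)⁻¹ = (eval x (nodal s v))⁻¹ := by
  have h := eval_interpolate_not_at_node 1 hx
  simp only [interpolate_one hvs hs, eval_one, Pi.one_apply, mul_one] at h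
  exact eq_inv_of_mul_eq_one_right h.symm

/-- The interpolation error of `w ↦ (z - w)⁻¹`, written with the Lagrange basis. -/
theorem inv_sub_sub_sum_eval_basis_mul_inv_sub (hvs : Set.InjOn v s) (hs : s.Nonempty)
    {X z : F} (hX : ∀ i ∈ s, X ≠ v i) (hz : ∀ i ∈ s, z ≠ v i) (hzX : z ≠ X) :
    (z - X)⁻¹ - ∑ i ∈ s, eval X (Lagrange.basis s v i) * (z - v i)⁻¹ =
      eval X (nodal s v) / (eval z (nodal s v) * (z - X)) := by
  have hωX := eval_nodal_not_at_node hX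
  have hωz := eval_nodal_not_at_node hz
  have hzX' := sub_ne_zero.2 hzX
  -- barycentric form of the basis, then `1/((X - v)(z - v)) = (1/(X - v) - 1/(z - v)) / (z - X)`
  have hsum : ∑ i ∈ s, eval X (Lagrange.basis s v i) * (z - v i)⁻¹ =
      eval X (nodal s v) * ((eval X (nodal s v))⁻¹ - (eval z (nodal s v))⁻¹) / (z - X) := by
    rw [← sum_nodalWeight_mul_inv_sub hvs hs hX, ← sum_nodalWeight_mul_inv_sub hvs hs hz,
      ← sum_sub_distrib, mul_sum, sum_div]
    refine sum_congr rfl fun i hi => ?_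
    have hXi := sub_ne_zero.2 (hX i hi)
    have hzi := sub_ne_zero.2 (hz i hi)
    rw [eval_basis_not_at_node hi (hX i hi)]
    field_simp
    ring
  rw [hsum]
  field_simp
  ring

end Lagrange

theorem IsCompact.le_iSup_of_continuousOn {α : Type*} [TopologicalSpace α] {s : Set α}
    (hs : IsCompact s) {f : α → ℝ} (hf : ContinuousOn f s) {a : α} (ha : a ∈ s) :
    f a ≤ ⨆ t : s, f t :=
  le_ciSup (by simpa only [Set.image_eq_range] using hs.bddAbove_image hf) (⟨a, ha⟩ : s)

section LogPotential

variable {𝕜 ι : Type*} [NormedField 𝕜] [Fintype ι]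

noncomputable def logPotential (x : ι → 𝕜) (z : 𝕜) : ℝ :=
  (1 / Fintype.card ι) * ∑ i, Real.log (1 / ‖z - x i‖)

theorem continuousAt_logPotential {x : ι → 𝕜} {z : 𝕜} (hz : ∀ i, z ≠ x i) :
    ContinuousAt (logPotential x) z := by
  unfold logPotential
  fun_prop (disch := simp [sub_eq_zero, hz])

theorem norm_prod_sub_eq_exp_neg_logPotential_pow [Nonempty ι] {x : ι → 𝕜} {z : 𝕜}
    (hz : ∀ i, z ≠ x i) :
    ‖∏ i, (z - x i)‖ = Real.exp (-logPotential x z) ^ Fintype.card ι := by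
  have hpos : ∀ i, 0 < ‖z - x i‖ := fun i => norm_pos_iff.2 (sub_ne_zero.2 (hz i))
  have hcard : (Fintype.card ι : ℝ) ≠ 0 := Nat.cast_ne_zero.2 Fintype.card_ne_zero
  have hsum : Fintype.card ι * -logPotential x z = ∑ i, Real.log ‖z - x i‖ := by
    simp only [logPotential, one_div, Real.log_inv, sum_neg_distrib]
    field_simp
  rw [← Real.exp_nat_mul, hsum, Real.exp_sum, norm_prod]
  exact prod_congr rfl fun i _ => (Real.exp_log (hpos i)).symm

theorem norm_prod_sub_div_norm_prod_sub_le [Nonempty ι] {x : ι → 𝕜} {X z : 𝕜} {S : ℝ}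
    (hX : ∀ i, X ≠ x i) (hz : ∀ i, z ≠ x i) (hS : logPotential x z ≤ S) :
    ‖∏ i, (X - x i)‖ / ‖∏ i, (z - x i)‖ ≤ Real.exp (S - logPotential x X) ^ Fintype.card ι := by
  rw [norm_prod_sub_eq_exp_neg_logPotential_pow hX, norm_prod_sub_eq_exp_neg_logPotential_pow hz,
    ← div_pow, ← Real.exp_sub]
  exact pow_le_pow_left₀ (Real.exp_nonneg _) (Real.exp_le_exp.2 (by linarith)) _

end LogPotential

section CauchyRepresentation

variable {E : Type*} [NormedAddCommGroup E] [NormedSpace ℂ E]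

theorem norm_two_pi_I_inv_smul_circleIntegral_le {f : ℂ → E} {c : ℂ} {R : ℝ} (hR : 0 ≤ R)
    {g : ℝ → ℝ} (hg : IntervalIntegrable g MeasureTheory.volume 0 (2 * π))
    (hfg : ∀ θ ∈ Set.Ioc 0 (2 * π), ‖f (circleMap c R θ)‖ ≤ g θ) :
    ‖(2 * π * I : ℂ)⁻¹ • ∮ z in C(c, R), f z‖ ≤ R / (2 * π) * ∫ θ in 0..2 * π, g θ := by
  have hnorm : ‖(2 * π * I : ℂ)⁻¹‖ = (2 * π)⁻¹ := by simp [Real.pi_pos.le]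
  have hint : ‖∮ z in C(c, R), f z‖ ≤ ∫ θ in 0..2 * π, R * g θ := by
    refine intervalIntegral.norm_integral_le_of_norm_le Real.two_pi_pos.le
      (Filter.Eventually.of_forall fun θ hθ => ?_) (hg.const_mul R)
    rw [norm_smul, deriv_circleMap, norm_mul, norm_circleMap_zero, norm_I, mul_one,
      abs_of_nonneg hR]
    exact mul_le_mul_of_nonneg_left (hfg θ hθ) hR
  rw [norm_smul, hnorm, intervalIntegral.integral_const_mul] at *
  rw [div_eq_inv_mul, mul_assoc]
  exact mul_le_mul_of_nonneg_left hint (by positivity)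

variable [CompleteSpace E] {f : ℂ → E} {c X : ℂ} {R : ℝ}

theorem DiffContOnCl.sub_sum_smul_eq_circleIntegral (hf : DiffContOnCl ℂ f (ball c R))
    (hX : X ∈ ball c R) {ι : Type*} (s : Finset ι) (a : ι → ℂ) {w : ι → ℂ}
    (hw : ∀ i ∈ s, w i ∈ ball c R) :
    f X - ∑ i ∈ s, a i • f (w i) =
      (2 * π * I : ℂ)⁻¹ • ∮ z in C(c, R), ((z - X)⁻¹ - ∑ i ∈ s, a i * (z - w i)⁻¹) • f z := by
  have hR : 0 < R := pos_of_mem_ball hX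
  have hcont : ∀ y ∈ ball c R, ContinuousOn (fun z => (z - y)⁻¹ • f z) (sphere c R) := by
    intro y hy
    refine ContinuousOn.smul ?_ ?_
    · exact (continuousOn_id.sub continuousOn_const).inv₀ fun z hz =>
        sub_ne_zero.2 (sphere_disjoint_ball.ne_of_mem hz hy)
    · exact hf.continuousOn.mono (by rw [closure_ball c hR.ne']; exact sphere_subset_closedBall)
  have hint : ∀ b : ℂ, ∀ y ∈ ball c R, CircleIntegrable (fun z => b • (z - y)⁻¹ • f z) c R :=
    fun b y hy => ((hcont y hy).fun_const_smul b).circleIntegrable hR.le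
  simp_rw [sub_smul, sum_smul, mul_smul]
  rw [circleIntegral.integral_sub (g := fun z => ∑ i ∈ s, a i • (z - w i)⁻¹ • f z)
      (by simpa only [one_smul] using hint 1 X hX)
      (CircleIntegrable.fun_sum s fun i hi => hint (a i) (w i) (hw i hi)),
    circleIntegral.integral_fun_sum fun i hi => hint (a i) (w i) (hw i hi), smul_sub,
    smul_sum, hf.two_pi_i_inv_smul_circleIntegral_sub_inv_smul hX]
  congr 1
  refine sum_congr rfl fun i hi => ?_
  rw [circleIntegral.integral_smul, smul_comm,
    hf.two_pi_i_inv_smul_circleIntegral_sub_inv_smul (hw i hi)]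

variable {ι : Type*} [Fintype ι] [DecidableEq ι] [Nonempty ι] {x : ι → ℂ}

theorem DiffContOnCl.sub_sum_eval_basis_smul_eq_circleIntegral (hf : DiffContOnCl ℂ f (ball c R))
    (hx : Function.Injective x) (hxball : ∀ i, x i ∈ ball c R) (hX : X ∈ ball c R)
    (hXnode : ∀ i, X ≠ x i) :
    f X - ∑ i, (Lagrange.basis univ x i).eval X • f (x i) =
      (2 * π * I : ℂ)⁻¹ •
        ∮ z in C(c, R), ((∏ i, (X - x i)) / ((∏ i, (z - x i)) * (z - X))) • f z := by
  rw [hf.sub_sum_smul_eq_circleIntegral hX univ _ fun i _ => hxball i]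
  congr 1
  refine circleIntegral.integral_congr (pos_of_mem_ball hX).le fun z hz => ?_
  have hzx : ∀ i ∈ univ, z ≠ x i := fun i _ => sphere_disjoint_ball.ne_of_mem hz (hxball i)
  simp only [← Lagrange.eval_nodal, Lagrange.inv_sub_sub_sum_eval_basis_mul_inv_sub hx.injOn
    univ_nonempty (fun i _ => hXnode i) hzx (sphere_disjoint_ball.ne_of_mem hz hX)]

theorem DiffContOnCl.norm_sub_sum_eval_basis_smul_le (hf : DiffContOnCl ℂ f (ball c R))
    (hx : Function.Injective x) (hxball : ∀ i, x i ∈ ball c R) (hX : X ∈ ball c R)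
    (hXnode : ∀ i, X ≠ x i) {S : ℝ}
    (hS : ∀ θ ∈ Set.Icc 0 (2 * π), logPotential x (circleMap c R θ) ≤ S) :
    ‖f X - ∑ i, (Lagrange.basis univ x i).eval X • f (x i)‖ ≤
      R / (2 * π) * (∫ θ in 0..2 * π, ‖f (circleMap c R θ)‖ / ‖circleMap c R θ - X‖) *
        Real.exp (S - logPotential x X) ^ Fintype.card ι := by
  have hR : 0 < R := pos_of_mem_ball hX
  have hγ : ∀ θ, circleMap c R θ ∈ sphere c R := circleMap_mem_sphere c hR.le
  have hγX : ∀ θ, circleMap c R θ - X ≠ 0 := fun θ =>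
    sub_ne_zero.2 (sphere_disjoint_ball.ne_of_mem (hγ θ) hX)
  have hquot : Continuous fun θ => ‖f (circleMap c R θ)‖ / ‖circleMap c R θ - X‖ := by
    refine Continuous.div ?_ (by fun_prop) fun θ => norm_ne_zero_iff.2 (hγX θ)
    refine (hf.continuousOn.comp_continuous (continuous_circleMap c R) fun θ => ?_).norm
    rw [closure_ball c hR.ne']
    exact sphere_subset_closedBall (hγ θ)
  rw [hf.sub_sum_eval_basis_smul_eq_circleIntegral hx hxball hX hXnode, mul_assoc (R / (2 * π)),
    ← intervalIntegral.integral_mul_const]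
  refine norm_two_pi_I_inv_smul_circleIntegral_le hR.le
    ((hquot.intervalIntegrable _ _).mul_const _) fun θ hθ => ?_
  have hratio := norm_prod_sub_div_norm_prod_sub_le hXnode
    (fun i => sphere_disjoint_ball.ne_of_mem (hγ θ) (hxball i)) (hS θ (Set.Ioc_subset_Icc_self hθ))
  rw [norm_smul, norm_div, norm_mul]
  calc _ = ‖∏ i, (X - x i)‖ / ‖∏ i, (circleMap c R θ - x i)‖ *
        (‖f (circleMap c R θ)‖ / ‖circleMap c R θ - X‖) := by ring
    _ ≤ _ := by rw [mul_comm _ (Real.exp _ ^ _)]; gcongr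

end CauchyRepresentation

theorem polynomial_interpolation_potential_bound_general (c : ℂ) (r : ℝ) (f : ℂ → ℂ)
    (U : Set ℂ) (hUsub : Metric.closedBall c r ⊆ U)
    (hf : DifferentiableOn ℂ f U)
    (n : ℕ) (x : Fin (n + 1) → ℂ) (hx : Function.Injective x)
    (hxball : ∀ i, x i ∈ Metric.ball c r)
    (Upot : ℂ → ℝ)
    (hUpot : ∀ z, Upot z = (1 / (n + 1)) * ∑ i, Real.log (1 / ‖z - x i‖))
    (P : ℂ → ℂ)
    (hP : ∀ X, P X = ∑ i, f (x i) * ∏ j ∈ univ.erase i, (X - x j) / (x i - x j))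
    (X : ℂ) (hX : X ∈ Metric.ball c r) (hXnode : ∀ i, X ≠ x i) :
    ‖f X - P X‖ ≤ (r / (2 * Real.pi)) *
      (∫ θ in (0:ℝ)..(2 * Real.pi),
        ‖f (c + (r : ℂ) * Complex.exp ((θ : ℂ) * Complex.I))‖ /
          ‖c + (r : ℂ) * Complex.exp ((θ : ℂ) * Complex.I) - X‖) *
      (Real.exp ((⨆ θ : Set.Icc (0:ℝ) (2 * Real.pi),
          Upot (c + (r : ℂ) * Complex.exp (((θ : ℝ) : ℂ) * Complex.I))) - Upot X)) ^ (n + 1) := by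
  obtain rfl : Upot = logPotential x := funext fun z => by
    rw [hUpot, logPotential, Fintype.card_fin, Nat.cast_succ]
  have hP' : P X = ∑ i, (Lagrange.basis univ x i).eval X • f (x i) := by
    simp only [hP, Lagrange.eval_basis, smul_eq_mul, mul_comm]
  have hpot : Continuous fun θ => logPotential x (circleMap c r θ) :=
    continuous_iff_continuousAt.2 fun θ =>
      (continuousAt_logPotential fun i => sphere_disjoint_ball.ne_of_mem
        (circleMap_mem_sphere c (pos_of_mem_ball hX).le θ) (hxball i)).comp
      (continuous_circleMap c r).continuousAt
  have hγ : ∀ θ : ℝ, c + (r : ℂ) * Complex.exp ((θ : ℂ) * Complex.I) = circleMap c r θ :=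
    fun _ => rfl
  simpa only [hP', hγ, Fintype.card_fin] using
    (hf.diffContOnCl_ball hUsub).norm_sub_sum_eval_basis_smul_le hx hxball hX hXnode
      fun θ hθ => isCompact_Icc.le_iSup_of_continuousOn hpot.continuousOn hθ

/-- Potential-form error bound (1c) for polynomial interpolation, with the contour taken
to be a circle of center `c` and radius `r`; `Upot` is the discrete logarithmic potential
of the uniform measure on the nodes. -/
theorem polynomial_interpolation_potential_bound (c : ℂ) (r : ℝ) (hr : 0 < r) (f : ℂ → ℂ)
    (U : Set ℂ) (hUopen : IsOpen U) (hUsub : Metric.closedBall c r ⊆ U)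
    (hf : DifferentiableOn ℂ f U)
    (n : ℕ) (x : Fin (n + 1) → ℂ) (hx : Function.Injective x)
    (hxball : ∀ i, x i ∈ Metric.ball c r)
    (Upot : ℂ → ℝ)
    (hUpot : ∀ z, Upot z = (1 / (n + 1)) * ∑ i, Real.log (1 / ‖z - x i‖))
    (P : ℂ → ℂ)
    (hP : ∀ X, P X = ∑ i, f (x i) * ∏ j ∈ univ.erase i, (X - x j) / (x i - x j))
    (X : ℂ) (hX : X ∈ Metric.ball c r) (hXnode : ∀ i, X ≠ x i) :
    ‖f X - P X‖ ≤ (r / (2 * Real.pi)) *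
      (∫ θ in (0:ℝ)..(2 * Real.pi),
        ‖f (c + (r : ℂ) * Complex.exp ((θ : ℂ) * Complex.I))‖ /
          ‖c + (r : ℂ) * Complex.exp ((θ : ℂ) * Complex.I) - X‖) *
      (Real.exp ((⨆ θ : Set.Icc (0:ℝ) (2 * Real.pi),
          Upot (c + (r : ℂ) * Complex.exp (((θ : ℝ) : ℂ) * Complex.I))) - Upot X)) ^ (n + 1) :=
  polynomial_interpolation_potential_bound_general c r f U hUsub hf n x hx hxball Upot hUpot P hP X
    hX hXnode
end

section
/- Let c ∈ ℂ, r > 0, let E be a compact subset of the open disk {z : |z - c| < r}, and let f : ℂ → ℂ be complex-differentiable on an open set containing the closed disk {z : |z - c| ≤ r}. For each n ∈ ℕ let x_0^{(n)}, …, x_n^{(n)} be distinct points of E, let m(n) ≤ n, and let z_1^{(n)}, …, z_{m(n)}^{(n)} ∈ ℂ \ E with z_j^{(n)} ∉ {x_0^{(n)}, …, x_n^{(n)}} for all j. Set q_n(s) = ∏_{j=1}^{m(n)} (s - z_j^{(n)}), φ_n(s) = ∏_{i=0}^n (s - x_i^{(n)}) / q_n(s), and let r_n(x) = ∑_{i=0}^n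 f(x_i^{(n)})·(q_n(x_i^{(n)})/q_n(x))·∏_{j≠i} (x - x_j^{(n)})/(x_i^{(n)} - x_j^{(n)}) be the rational interpolant of f with nodes x_i^{(n)} and poles z_j^{(n)}. Suppose ρ > 0 is such that limsup_{n→∞} ((sup_{x ∈ E} |φ_n(x)|)·(sup_{θ∈[0,2π]} 1/|φ_n(c + re^{iθ})|))^{1/(n+1)} ≤ ρ. Then for every x ∈ E, limsup_{n→∞} |f(x) - r_n(x)|^{1/(n+1)} ≤ ρ. -/
/-!
Hermite's formula: if `g` is holomorphic on a closed disk containing the distinct nodes `vᵢ`, `ω` is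
the nodal polynomial and `P[g]` the polynomial interpolant, then for `x` inside the disk
`2πi (g x - P[g] x) = ∮ ω(x) / (ω(t) (t - x)) g(t) dt`. The rational interpolant is
`r_n = P[f q_n] / q_n`, so Hermite's formula for `g = f q_n` gives
`2πi (f x - r_n x) = ∮ φ_n(x) / φ_n(t) · f(t) / (t - x) dt` and therefore
`|f x - r_n x| ≤ C · sup_E |φ_n| · sup_Γ 1 / |φ_n|` with `C` independent of `n`.
Taking `(n + 1)`-th roots, `C ^ (1 / (n + 1)) → 1`.
-/

open Finset Polynomial Complex Real Filter Topology Metric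

theorem IsCompact.le_biSup_of_continuousOn {α : Type*} [TopologicalSpace α] {K : Set α}
    (hK : IsCompact K) {F : α → ℝ} (hF : ContinuousOn F K) {x : α} (hx : x ∈ K) :
    F x ≤ ⨆ y ∈ K, F y := by
  refine le_ciSup₂ (f := fun y (_ : y ∈ K) => F y) ((hK.bddAbove_image hF).mono ?_) x hx
  rintro _ ⟨_, ⟨y, rfl⟩, ⟨hy, rfl⟩⟩
  exact ⟨y, hy, rfl⟩

theorem le_iSup_circleMap_of_continuousOn {c : ℂ} {r : ℝ} {G : ℂ → ℝ}
    (hG : ContinuousOn G (sphere c r)) {t : ℂ} (ht : t ∈ sphere c r) :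
    G t ≤ ⨆ θ : Set.Icc 0 (2 * π), G (circleMap c r θ) := by
  have hr : 0 ≤ r := nonneg_of_mem_sphere ht
  obtain ⟨θ, hθ, rfl⟩ : t ∈ circleMap c r '' Set.Ioc 0 (2 * π) := by
    rwa [image_circleMap_Ioc, abs_of_nonneg hr]
  have hcont : Continuous fun θ : Set.Icc 0 (2 * π) => G (circleMap c r θ) :=
    hG.comp_continuous ((continuous_circleMap c r).comp continuous_subtype_val)
      fun θ => circleMap_mem_sphere c hr θ
  exact le_ciSup (isCompact_range hcont).bddAbove ⟨θ, Set.Ioc_subset_Icc_self hθ⟩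

theorem limsup_ofReal_rpow_le_of_le_const_mul {a b : ℕ → ℝ} {C : ℝ} (ha : ∀ n, 0 ≤ a n)
    (hb : ∀ n, 0 ≤ b n) (hab : ∀ n, a n ≤ C * b n) :
    limsup (fun n : ℕ => ENNReal.ofReal (a n ^ ((1 : ℝ) / (n + 1)))) atTop
      ≤ limsup (fun n : ℕ => ENNReal.ofReal (b n ^ ((1 : ℝ) / (n + 1)))) atTop := by
  set C' := max C 1
  have hC' : 0 < C' := zero_lt_one.trans_le (le_max_right _ _)
  set u := fun n : ℕ => ENNReal.ofReal (C' ^ ((1 : ℝ) / (n + 1)))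
  set w := fun n : ℕ => ENNReal.ofReal (b n ^ ((1 : ℝ) / (n + 1)))
  have hu : limsup u atTop = 1 := by
    have := ENNReal.tendsto_ofReal ((Real.continuousAt_const_rpow hC'.ne').tendsto.comp
      tendsto_one_div_add_atTop_nhds_zero_nat)
    rw [Real.rpow_zero, ENNReal.ofReal_one] at this
    exact this.limsup_eq
  calc limsup (fun n : ℕ => ENNReal.ofReal (a n ^ ((1 : ℝ) / (n + 1)))) atTop
      ≤ limsup (u * w) atTop := by
        refine limsup_le_limsup (Eventually.of_forall fun n => ?_)
        rw [Pi.mul_apply, ← ENNReal.ofReal_mul (by positivity), ← Real.mul_rpow hC'.le (hb n)]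
        refine ENNReal.ofReal_le_ofReal (Real.rpow_le_rpow (ha n) ?_ (by positivity))
        exact (hab n).trans (mul_le_mul_of_nonneg_right (le_max_left _ _) (hb n))
    _ ≤ limsup u atTop * limsup w atTop :=
        ENNReal.limsup_mul_le' (.inl (by simp [hu])) (.inl (by simp [hu]))
    _ = limsup w atTop := by rw [hu, one_mul]

namespace Lagrange

section Field

variable {F ι : Type*} [Field F] [DecidableEq ι] {s : Finset ι} {v : ι → F}

theorem eval_basis_eq_prod (i : ι) (x : F) :
    (Lagrange.basis s v i).eval x = ∏ j ∈ s.erase i, (x - v j) / (v i - v j) := by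
  simp only [Lagrange.basis, basisDivisor, eval_prod, eval_mul, eval_C, eval_sub, eval_X,
    div_eq_inv_mul]

theorem eval_interpolate_div_eq_sum (f q : F → F) (x : F) :
    (interpolate s v fun i => f (v i) * q (v i)).eval x / q x
      = ∑ i ∈ s, f (v i) * (q (v i) / q x) * ∏ j ∈ s.erase i, (x - v j) / (v i - v j) := by
  rw [interpolate_apply, eval_finsetSum, sum_div]
  refine sum_congr rfl fun i _ => ?_
  rw [eval_mul, eval_C, eval_basis_eq_prod]
  ring

theorem degree_divByMonic_X_sub_C_lt {p : F[X]} {n : ℕ} (hp : p.degree ≤ n) (t : F) :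
    (p /ₘ (X - C t)).degree < n := by
  by_cases hp0 : p = 0
  · simp [hp0]
  exact (degree_divByMonic_lt p _ hp0 (by simp)).trans_le hp

/-- Interpolation reproduces the difference quotient `y ↦ (ω t - ω y) / (t - y)` of the nodal
polynomial `ω`, which has degree `< #s`. -/
theorem sum_eval_basis_div_sub (hvs : Set.InjOn v s) {t x : F} (ht : ∀ i ∈ s, t ≠ v i)
    (htx : t ≠ x) :
    ∑ i ∈ s, (Lagrange.basis s v i).eval x / (t - v i)
      = (t - x)⁻¹ - (nodal s v).eval x / ((nodal s v).eval t * (t - x)) := by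
  have hωt : (nodal s v).eval t ≠ 0 := eval_nodal_not_at_node ht
  set h := (C ((nodal s v).eval t) - nodal s v) /ₘ (X - C t)
  have hmul : ∀ y, (y - t) * h.eval y = (nodal s v).eval t - (nodal s v).eval y := fun y => by
    have hroot : (C ((nodal s v).eval t) - nodal s v).IsRoot t := by simp
    simpa using congrArg (eval y) (mul_divByMonic_eq_iff_isRoot.mpr hroot)
  have hdeg : h.degree < #s := degree_divByMonic_X_sub_C_lt
    ((degree_sub_le _ _).trans (max_le (degree_C_le.trans (by simp)) degree_nodal.le)) t
  have hnode : ∀ i ∈ s, h.eval (v i) = (nodal s v).eval t / (v i - t) := fun i hi => by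
    rw [eq_div_iff (sub_ne_zero.mpr (ht i hi).symm), mul_comm, hmul, eval_nodal_at_node hi,
      sub_zero]
  have hinterp : h.eval x
      = -(nodal s v).eval t * ∑ i ∈ s, (Lagrange.basis s v i).eval x / (t - v i) := by
    conv_lhs => rw [eq_interpolate hvs hdeg]
    rw [interpolate_apply, eval_finsetSum, mul_sum]
    refine sum_congr rfl fun i hi => ?_
    rw [eval_mul, eval_C, hnode i hi, ← neg_sub t (v i), div_neg]
    ring
  have htx' : t - x ≠ 0 := sub_ne_zero.mpr htx
  rw [← mul_right_inj' (neg_ne_zero.mpr hωt), ← hinterp]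
  field_simp
  linear_combination -hmul x

end Field

section Complex

variable {ι : Type*} [DecidableEq ι] {s : Finset ι} {v : ι → ℂ}

theorem two_pi_I_mul_sub_eval_interpolate_eq_circleIntegral (hvs : Set.InjOn v s) {c : ℂ}
    {r : ℝ} {g : ℂ → ℂ} (hg : DifferentiableOn ℂ g (closedBall c r))
    (hv : ∀ i ∈ s, v i ∈ ball c r) {x : ℂ} (hx : x ∈ ball c r) :
    2 * π * I * (g x - (interpolate s v (g ∘ v)).eval x)
      = ∮ t in C(c, r), (nodal s v).eval x / ((nodal s v).eval t * (t - x)) * g t := by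
  have hr : 0 ≤ r := (pos_of_mem_ball hx).le
  have hne : ∀ t ∈ sphere c r, ∀ w ∈ ball c r, t ≠ w :=
    fun t ht w hw => sphere_disjoint_ball.ne_of_mem ht hw
  have hcauchy : ∀ w ∈ ball c r, (∮ t in C(c, r), (t - w)⁻¹ * g t) = 2 * π * I * g w :=
    fun w hw => by simpa only [smul_eq_mul] using hg.circleIntegral_sub_inv_smul hw
  have hintegrable : ∀ w ∈ ball c r, CircleIntegrable (fun t => (t - w)⁻¹ * g t) c r := by
    refine fun w hw => ContinuousOn.circleIntegrable hr (ContinuousOn.mul ?_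
      (hg.continuousOn.mono sphere_subset_closedBall))
    exact (continuousOn_id.sub continuousOn_const).inv₀
      fun t ht => sub_ne_zero.mpr (hne t ht w hw)
  have hterm : ∀ i ∈ s, CircleIntegrable
      (fun t => (Lagrange.basis s v i).eval x * ((t - v i)⁻¹ * g t)) c r :=
    fun i hi => (hintegrable _ (hv i hi)).const_fun_smul
  calc 2 * π * I * (g x - (interpolate s v (g ∘ v)).eval x)
      = (∮ t in C(c, r), (t - x)⁻¹ * g t)
          - ∑ i ∈ s, (Lagrange.basis s v i).eval x * ∮ t in C(c, r), (t - v i)⁻¹ * g t := by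
        rw [hcauchy x hx, interpolate_apply, eval_finsetSum, mul_sub, mul_sum]
        simp only [eval_mul, eval_C, Function.comp_apply]
        congr 1
        refine sum_congr rfl fun i hi => ?_
        rw [hcauchy _ (hv i hi)]
        ring
    _ = ∮ t in C(c, r), ((t - x)⁻¹ * g t
          - ∑ i ∈ s, (Lagrange.basis s v i).eval x * ((t - v i)⁻¹ * g t)) := by
        simp_rw [← circleIntegral.integral_const_mul]
        rw [circleIntegral.integral_sub (hintegrable x hx) (CircleIntegrable.fun_sum s hterm),
          circleIntegral.integral_fun_sum hterm]
    _ = _ := by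
        refine circleIntegral.integral_congr hr fun t ht => ?_
        have hkernel := sum_eval_basis_div_sub hvs (fun i hi => hne t ht _ (hv i hi))
          (hne t ht x hx)
        have hsum : ∑ i ∈ s, (Lagrange.basis s v i).eval x * ((t - v i)⁻¹ * g t)
            = (∑ i ∈ s, (Lagrange.basis s v i).eval x / (t - v i)) * g t := by
          simp only [sum_mul, div_eq_mul_inv, mul_assoc]
        rw [hsum, hkernel]
        ring

theorem norm_sub_eval_interpolate_div_le (hvs : Set.InjOn v s) {c : ℂ} {r : ℝ} {f q : ℂ → ℂ}
    (hf : DifferentiableOn ℂ f (closedBall c r)) (hq : DifferentiableOn ℂ q (closedBall c r))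
    (hv : ∀ i ∈ s, v i ∈ ball c r) {x : ℂ} (hx : x ∈ ball c r) (hqx : q x ≠ 0)
    {M A B : ℝ} (hM : ∀ t ∈ sphere c r, ‖f t‖ ≤ M) (hA : ‖(nodal s v).eval x‖ / ‖q x‖ ≤ A)
    (hB : ∀ t ∈ sphere c r, ‖q t‖ / ‖(nodal s v).eval t‖ ≤ B) :
    ‖f x - (interpolate s v fun i => f (v i) * q (v i)).eval x / q x‖
      ≤ r * M / (r - dist x c) * (A * B) := by
  have hr : 0 < r := pos_of_mem_ball hx
  have hgap : 0 < r - dist x c := sub_pos.mpr (mem_ball.mp hx)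
  have hbound : ∀ t ∈ sphere c r,
      ‖(nodal s v).eval x / ((nodal s v).eval t * (t - x)) * (f t * q t)‖
        ≤ ‖q x‖ * A * B * M / (r - dist x c) := by
    intro t ht
    have hdist : r - dist x c ≤ ‖t - x‖ := by
      rw [← dist_eq_norm, ← mem_sphere.mp ht]
      linarith [dist_triangle t x c]
    have hA0 : 0 ≤ A := (by positivity : (0 : ℝ) ≤ _).trans hA
    have hB0 : 0 ≤ B := (by positivity : (0 : ℝ) ≤ _).trans (hB t ht)
    calc ‖(nodal s v).eval x / ((nodal s v).eval t * (t - x)) * (f t * q t)‖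
        = ‖(nodal s v).eval x‖ * (‖q t‖ / ‖(nodal s v).eval t‖) * ‖f t‖ / ‖t - x‖ := by
          simp only [norm_mul, norm_div]
          ring
      _ ≤ ‖q x‖ * A * B * M / (r - dist x c) := by
          gcongr
          · exact mul_nonneg (mul_nonneg (mul_nonneg (norm_nonneg _) hA0) hB0)
              ((norm_nonneg _).trans (hM t ht))
          · exact (div_le_iff₀' (norm_pos_iff.mpr hqx)).mp hA
          · exact hB t ht
          · exact hM t ht
  have hhermite := two_pi_I_mul_sub_eval_interpolate_eq_circleIntegral hvs (hf.mul hq) hv hx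
  have h2π : ‖(2 * π * I : ℂ)‖ = 2 * π := by simp [pi_pos.le]
  calc ‖f x - (interpolate s v fun i => f (v i) * q (v i)).eval x / q x‖
      = ‖2 * π * I * ((f * q) x - (interpolate s v ((f * q) ∘ v)).eval x)‖
          / (2 * π * ‖q x‖) := by
        rw [norm_mul, h2π, mul_div_mul_left _ _ (by positivity), ← norm_div, sub_div,
          Pi.mul_apply, mul_div_cancel_right₀ _ hqx]
        rfl
    _ ≤ 2 * π * r * (‖q x‖ * A * B * M / (r - dist x c)) / (2 * π * ‖q x‖) := by
        rw [hhermite]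
        gcongr
        exact circleIntegral.norm_integral_le_of_norm_le_const hr.le hbound
    _ = r * M / (r - dist x c) * (A * B) := by
        field_simp

theorem norm_sub_eval_interpolate_div_le_iSup (hvs : Set.InjOn v s) {c : ℂ} {r : ℝ}
    {E : Set ℂ} (hE : IsCompact E) (hEr : E ⊆ ball c r) (hv : ∀ i ∈ s, v i ∈ E) {f q : ℂ → ℂ}
    (hf : DifferentiableOn ℂ f (closedBall c r)) (hq : Differentiable ℂ q)
    (hqE : ∀ y ∈ E, q y ≠ 0) {M : ℝ} (hM : ∀ t ∈ sphere c r, ‖f t‖ ≤ M) {x : ℂ} (hx : x ∈ E) :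
    ‖f x - (interpolate s v fun i => f (v i) * q (v i)).eval x / q x‖
      ≤ r * M / (r - dist x c) * ((⨆ y ∈ E, ‖(nodal s v).eval y / q y‖)
        * ⨆ θ : Set.Icc 0 (2 * π),
          1 / ‖(nodal s v).eval (circleMap c r θ) / q (circleMap c r θ)‖) := by
  refine norm_sub_eval_interpolate_div_le hvs hf hq.differentiableOn (fun i hi => hEr (hv i hi))
    (hEr hx) (hqE x hx) hM ?_ fun t ht => ?_
  · rw [← norm_div]
    exact hE.le_biSup_of_continuousOn (F := fun y => ‖(nodal s v).eval y / q y‖)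
      ((nodal s v).continuous.continuousOn.div hq.continuous.continuousOn hqE).norm hx
  · have hinv : ∀ y, 1 / ‖(nodal s v).eval y / q y‖ = ‖q y‖ / ‖(nodal s v).eval y‖ :=
      fun y => by rw [norm_div, one_div_div]
    rw [← hinv]
    refine le_iSup_circleMap_of_continuousOn
      (G := fun y => 1 / ‖(nodal s v).eval y / q y‖) ?_ ht
    simp only [hinv]
    exact hq.continuous.continuousOn.norm.div (nodal s v).continuous.continuousOn.norm
      fun t ht => norm_ne_zero_iff.mpr (eval_nodal_not_at_node fun i hi =>
        sphere_disjoint_ball.ne_of_mem ht (hEr (hv i hi)))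

end Complex

end Lagrange

theorem rational_interpolation_exponential_convergence_general (c : ℂ) (r : ℝ)
    (E : Set ℂ) (hE_compact : IsCompact E) (hE_sub : E ⊆ Metric.ball c r)
    (f : ℂ → ℂ) (U : Set ℂ) (hUsub : Metric.closedBall c r ⊆ U)
    (hf : DifferentiableOn ℂ f U)
    (x : ∀ n : ℕ, Fin (n + 1) → ℂ)
    (hx_inj : ∀ n, Function.Injective (x n))
    (hx_mem : ∀ n i, x n i ∈ E)
    (m : ℕ → ℕ)
    (z : ∀ n : ℕ, Fin (m n) → ℂ)
    (hz_notE : ∀ n j, z n j ∉ E)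
    (q : ℕ → ℂ → ℂ) (hq : ∀ n s, q n s = ∏ j, (s - z n j))
    (φ : ℕ → ℂ → ℂ) (hφ : ∀ n s, φ n s = (∏ i, (s - x n i)) / q n s)
    (R : ℕ → ℂ → ℂ)
    (hR : ∀ n X, R n X = ∑ i, f (x n i) * (q n (x n i) / q n X) *
      ∏ j ∈ univ.erase i, (X - x n j) / (x n i - x n j))
    (ρ : ℝ)
    (hfac : Filter.limsup (fun n : ℕ => ENNReal.ofReal
        (((⨆ X ∈ E, ‖φ n X‖) *
          (⨆ θ : Set.Icc (0:ℝ) (2 * Real.pi),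
            1 / ‖φ n (c + (r : ℂ) * Complex.exp (((θ : ℝ) : ℂ) * Complex.I))‖))
          ^ ((1 : ℝ) / (n + 1))))
        Filter.atTop ≤ ENNReal.ofReal ρ) :
    ∀ X ∈ E, Filter.limsup (fun n : ℕ =>
        ENNReal.ofReal (‖f X - R n X‖ ^ ((1 : ℝ) / (n + 1))))
      Filter.atTop ≤ ENNReal.ofReal ρ := by
  intro X hX
  obtain rfl : φ = fun n s => (Lagrange.nodal univ (x n)).eval s / q n s :=
    funext₂ fun n s => by rw [hφ, Lagrange.eval_nodal]
  have hq_diff : ∀ n, Differentiable ℂ (q n) := fun n => by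
    rw [funext (hq n)]
    fun_prop
  have hq_ne : ∀ n, ∀ s ∈ E, q n s ≠ 0 := fun n s hs => by
    rw [hq, prod_ne_zero_iff]
    exact fun j _ => sub_ne_zero.mpr fun h => hz_notE n j (h ▸ hs)
  have hfB : DifferentiableOn ℂ f (closedBall c r) := hf.mono hUsub
  obtain ⟨M, hM⟩ := (isCompact_sphere c r).exists_bound_of_continuousOn
    (hfB.continuousOn.mono sphere_subset_closedBall)
  refine (limsup_ofReal_rpow_le_of_le_const_mul (C := r * M / (r - dist X c))
    (fun n => norm_nonneg _)
    (fun n => mul_nonneg (Real.iSup_nonneg fun _ => Real.iSup_nonneg fun _ => norm_nonneg _)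
      (Real.iSup_nonneg fun _ => by positivity)) fun n => ?_).trans hfac
  rw [hR, ← Lagrange.eval_interpolate_div_eq_sum]
  exact Lagrange.norm_sub_eval_interpolate_div_le_iSup (hx_inj n).injOn hE_compact hE_sub
    (fun i _ => hx_mem n i) hfB (hq_diff n) (hq_ne n) hM hX

/-- Asymptotic exponential convergence estimate (2f) for rational interpolation with
prescribed poles in conditional form: if the geometric factor
`(sup_E |φ_n| · sup_Γ 1/|φ_n|)^{1/(n+1)}` has limsup at most `ρ`, then the rational
interpolation error satisfies `limsup |f(x) - r_n(x)|^{1/(n+1)} ≤ ρ` on `E`. -/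
theorem rational_interpolation_exponential_convergence (c : ℂ) (r : ℝ) (hr : 0 < r)
    (E : Set ℂ) (hE_compact : IsCompact E) (hE_sub : E ⊆ Metric.ball c r)
    (f : ℂ → ℂ) (U : Set ℂ) (hUopen : IsOpen U) (hUsub : Metric.closedBall c r ⊆ U)
    (hf : DifferentiableOn ℂ f U)
    (x : ∀ n : ℕ, Fin (n + 1) → ℂ)
    (hx_inj : ∀ n, Function.Injective (x n))
    (hx_mem : ∀ n i, x n i ∈ E)
    (m : ℕ → ℕ) (hm : ∀ n, m n ≤ n)
    (z : ∀ n : ℕ, Fin (m n) → ℂ)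
    (hz_notE : ∀ n j, z n j ∉ E)
    (hz_ne : ∀ n j i, z n j ≠ x n i)
    (q : ℕ → ℂ → ℂ) (hq : ∀ n s, q n s = ∏ j, (s - z n j))
    (φ : ℕ → ℂ → ℂ) (hφ : ∀ n s, φ n s = (∏ i, (s - x n i)) / q n s)
    (R : ℕ → ℂ → ℂ)
    (hR : ∀ n X, R n X = ∑ i, f (x n i) * (q n (x n i) / q n X) *
      ∏ j ∈ univ.erase i, (X - x n j) / (x n i - x n j))
    (ρ : ℝ) (hρ : 0 < ρ)
    (hfac : Filter.limsup (fun n : ℕ => ENNReal.ofReal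
        (((⨆ X ∈ E, ‖φ n X‖) *
          (⨆ θ : Set.Icc (0:ℝ) (2 * Real.pi),
            1 / ‖φ n (c + (r : ℂ) * Complex.exp (((θ : ℝ) : ℂ) * Complex.I))‖))
          ^ ((1 : ℝ) / (n + 1))))
        Filter.atTop ≤ ENNReal.ofReal ρ) :
    ∀ X ∈ E, Filter.limsup (fun n : ℕ =>
        ENNReal.ofReal (‖f X - R n X‖ ^ ((1 : ℝ) / (n + 1))))
      Filter.atTop ≤ ENNReal.ofReal ρ :=
  rational_interpolation_exponential_convergence_general c r E hE_compact hE_sub f U hUsub hf x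
    hx_inj hx_mem m z hz_notE q hq φ hφ R hR ρ hfac
end
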